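/- arXiv:2406.15872 — 7 statements merged into one kernel-verified Lean document; each statement's English description precedes it below -/
import Mathlib

section
/- Let A be a nonsingular g-circulant matrix of order k over a field with gcd(g,k) = 1. Then A⁻¹ is a g⁻¹-circulant matrix, where g·g⁻¹ ≡ 1 (mod k). -/
theorem g_circulant_stmt_8 (k : ℕ) [NeZero k] (F : Type*) [Field F]
    (g h : ℕ) (hg : Nat.gcd g k = 1) (hgh : (g : ZMod k) * (h : ZMod k) = 1)
    (A : Matrix (ZMod k) (ZMod k) F) (hinv : IsUnit A)
    (hA : ∀ i j : ZMod k, A i j = A (i + 1) (j + (g : ZMod k))) :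
    ∀ i j : ZMod k, A⁻¹ i j = A⁻¹ (i + 1) (j + (h : ZMod k)) := by
  have hsub : A.submatrix (Equiv.addRight (1 : ZMod k)) (Equiv.addRight ((g : ZMod k))) = A := by
    ext i j
    simpa [Matrix.submatrix_apply] using (hA i j).symm
  have key : ∀ i j : ZMod k, A⁻¹ i j = A⁻¹ (i + (g : ZMod k)) (j + 1) := by
    intro i j
    have h2 := Matrix.inv_submatrix_equiv A (Equiv.addRight (1 : ZMod k))
      (Equiv.addRight ((g : ZMod k)))
    rw [hsub] at h2
    conv_lhs => rw [h2]
    simp [Matrix.submatrix_apply]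
  have iter : ∀ n : ℕ, ∀ i j : ZMod k,
      A⁻¹ i j = A⁻¹ (i + (n : ZMod k) * (g : ZMod k)) (j + (n : ZMod k)) := by
    intro n
    induction n with
    | zero => simp
    | succ m ih =>
      intro i j
      rw [ih i j, key]
      push_cast
      ring_nf
  intro i j
  have h3 := iter h i j
  rw [mul_comm, hgh] at h3
  simpa using h3
end

section
/- Let A be a g-circulant matrix of order k over a field, with gcd(k,g) = 1 and g² ≢ 1 (mod k). Then A is not involutory (A² ≠ I). -/
theorem g_circulant_stmt_11 (k : ℕ) [NeZero k] (F : Type*) [Field F]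
    (g : ℕ) (hg : Nat.gcd g k = 1) (hg2 : ((g : ZMod k)) ^ 2 ≠ 1)
    (c : ZMod k → F) (A : Matrix (ZMod k) (ZMod k) F)
    (hA : ∀ i j : ZMod k, A i j = c (j - (g : ZMod k) * i)) :
    A * A ≠ 1 := by
  intro h
  have key : (A * A) 0 0 = (A * A) 1 ((g : ZMod k) ^ 2) := by
    simp only [Matrix.mul_apply, hA]
    refine Fintype.sum_equiv (Equiv.addRight (g : ZMod k)) _ _ ?_
    intro l
    simp only [Equiv.coe_addRight]
    ring_nf
  have h1 : (A * A) 0 0 = 1 := by rw [h]; simp [Matrix.one_apply]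
  have h2 : (A * A) 1 ((g : ZMod k) ^ 2) = 0 := by
    rw [h]
    simp only [Matrix.one_apply]
    rw [if_neg (fun e => hg2 e.symm)]
  rw [h1, h2] at key
  exact one_ne_zero key
end

section
/- Let A be a g-circulant matrix of order 2^d × 2^d with g = 2^{d−1} − 1 and first row (c₀, c₁, …, c_{2^d−1}). Then the submatrix of A formed by the even-indexed rows R₀, R₂, …, R_{2^d−2} and even-indexed columns C₀, C₂, …, C_{2^d−2} is the left-circulant matrix with first row (c₀, c₂, c₄, …, c_{2^d−2}). -/
theorem g_circulant_stmt_12 (d : ℕ) (hd : 2 ≤ d) (F : Type*) [Field F]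
    (g : ZMod (2 ^ d)) (hg : g = 2 ^ (d - 1) - 1)
    (c : ZMod (2 ^ d) → F) (A : Matrix (ZMod (2 ^ d)) (ZMod (2 ^ d)) F)
    (hA : ∀ i j : ZMod (2 ^ d), A i j = c (j - g * i)) :
    A.submatrix (fun i : Fin (2 ^ (d - 1)) => ((2 * (i : ℕ) : ℕ) : ZMod (2 ^ d)))
        (fun j : Fin (2 ^ (d - 1)) => ((2 * (j : ℕ) : ℕ) : ZMod (2 ^ d))) =
      Matrix.of fun i j : Fin (2 ^ (d - 1)) =>
        c ((2 * ((i + j : Fin (2 ^ (d - 1))) : ℕ) : ℕ) : ZMod (2 ^ d)) := by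
  have hdd : d - 1 + 1 = d := by omega
  have hz : ((2 : ZMod (2 ^ d)) ^ d) = 0 := by
    have := ZMod.natCast_self (2 ^ d)
    push_cast at this
    exact this
  have key : ((2 : ZMod (2 ^ d)) ^ (d - 1)) * 2 = 0 := by
    rw [← pow_succ, hdd]; exact hz
  ext i j
  simp only [Matrix.submatrix_apply, Matrix.of_apply, hA, hg]
  congr 1
  have hval : ((i + j : Fin (2 ^ (d-1))) : ℕ) = (i.val + j.val) % 2 ^ (d-1) := rfl
  have h2n : 2 * 2 ^ (d-1) = 2 ^ d := by rw [← pow_succ', Nat.sub_add_cancel (by omega)]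
  have hsplit : 2 * (i.val + j.val) = 2 * ((i.val + j.val) % 2 ^ (d-1)) + 2 ^ d * ((i.val + j.val) / 2 ^ (d-1)) := by
    rw [← h2n]
    have := Nat.mod_add_div (i.val + j.val) (2 ^ (d-1))
    nlinarith [this]
  rw [hval]
  have hrhs : ((2 * ((i.val + j.val) % 2 ^ (d-1)) : ℕ) : ZMod (2 ^ d))
      = ((2 * (i.val + j.val) : ℕ) : ZMod (2 ^ d)) := by
    rw [hsplit]
    push_cast
    rw [hz]
    ring
  rw [hrhs]
  push_cast
  linear_combination (-(i.val : ZMod (2 ^ d))) * key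
end

section
/- Let A be a g-circulant involutory matrix of order 2^d over a field of characteristic 2, with g = 2^{d−1} − 1 and d ≥ 3. Then c₁ + c₃ + ⋯ + c_{2^d−1} = 0, where (c₀, …, c_{2^d−1}) is the first row of A. -/
theorem g_circulant_stmt_14 (d : ℕ) (hd : 3 ≤ d) (F : Type*) [Field F] [CharP F 2]
    (g : ZMod (2 ^ d)) (hg : g = 2 ^ (d - 1) - 1)
    (c : ZMod (2 ^ d) → F) (A : Matrix (ZMod (2 ^ d)) (ZMod (2 ^ d)) F)
    (hA : ∀ i j : ZMod (2 ^ d), A i j = c (j - g * i))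
    (hinv : A * A = 1) :
    ∑ i ∈ Finset.range (2 ^ (d - 1)), c ((2 * i + 1 : ℕ) : ZMod (2 ^ d)) = 0 := by
  classical
  obtain ⟨m, rfl⟩ : ∃ m, d = m + 1 := ⟨d - 1, by omega⟩
  simp only [Nat.add_sub_cancel] at hg ⊢
  have hm : 2 ≤ m := by omega
  have hn2 : (2:ℕ) ^ m < 2 ^ (m + 1) := by
    rw [pow_succ]; nlinarith [Nat.one_le_two_pow (n := m)]
  set h : ZMod (2 ^ (m+1)) := ((2 ^ m : ℕ) : ZMod (2 ^ (m+1))) with hh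
  have hval : h.val = 2 ^ m := ZMod.val_cast_of_lt hn2
  have hne : h ≠ 0 := by
    intro h0
    rw [h0, ZMod.val_zero] at hval
    exact absurd hval.symm (by positivity)
  have h2h : h + h = 0 := by
    rw [hh, ← Nat.cast_add, show 2 ^ m + 2 ^ m = 2 ^ (m+1) by ring, ZMod.natCast_self]
  have hgh : g = h - 1 := by
    rw [hg, hh]; push_cast; norm_num
  -- key multiplication fact
  have hmul : ∀ k : ZMod (2 ^ (m+1)), h * k = if Even k.val then 0 else h := by
    intro k
    have hk' : ((k.val : ℕ) : ZMod (2 ^ (m+1))) = k := by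
      rw [ZMod.natCast_val, ZMod.cast_id]
    conv_lhs => rw [← hk']
    rw [hh, ← Nat.cast_mul]
    by_cases hk : Even k.val
    · simp only [hk, if_true]
      obtain ⟨t, ht⟩ := hk
      rw [ht, show 2 ^ m * (t + t) = 2 ^ (m+1) * t by ring, Nat.cast_mul,
        ZMod.natCast_self, zero_mul]
    · simp only [hk, if_false]
      obtain ⟨t, ht⟩ := Nat.odd_iff.mpr (Nat.not_even_iff.mp hk)
      rw [ht, show 2 ^ m * (2 * t + 1) = 2 ^ (m+1) * t + 2 ^ m by ring, Nat.cast_add,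
        Nat.cast_mul, ZMod.natCast_self, zero_mul, zero_add]
  have hkey : ∀ k : ZMod (2 ^ (m+1)), h - g * k = if Even k.val then k + h else k := by
    intro k
    rw [hgh, sub_one_mul, hmul k]
    by_cases hk : Even k.val
    · simp only [hk, if_true]; ring
    · simp only [hk, if_false]; ring
  -- parity of val of k + h
  have hparity : ∀ k : ZMod (2 ^ (m+1)), Even k.val → Even (k + h).val := by
    intro k hk
    rw [ZMod.val_add, hval]
    have h2 : (2:ℕ) ∣ 2 ^ (m+1) := dvd_pow_self 2 (by omega)
    have h2m : (2:ℕ) ∣ 2 ^ m := dvd_pow_self 2 (by omega)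
    rw [Nat.even_iff] at hk ⊢
    rw [Nat.mod_mod_of_dvd _ h2]
    omega
  -- evaluate (A*A) 0 h = 0
  have H : ∑ k : ZMod (2 ^ (m+1)), c k * c (h - g * k) = 0 := by
    have := congrFun (congrFun hinv 0) h
    rw [Matrix.mul_apply, Matrix.one_apply_ne' hne] at this
    simpa only [hA, mul_zero, sub_zero] using this
  rw [Finset.sum_congr rfl (fun k _ => by rw [hkey k])] at H
  rw [← Finset.sum_filter_add_sum_filter_not Finset.univ (fun k => Even (ZMod.val k))] at H
  have Heven : ∑ k ∈ Finset.univ.filter (fun k => Even (ZMod.val k)),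
      c k * c (if Even k.val then k + h else k) = 0 := by
    apply Finset.sum_involution (g := fun k _ => k + h)
    · intro a ha
      simp only [Finset.mem_filter, Finset.mem_univ, true_and] at ha
      have ha' : Even (a + h).val := hparity a ha
      simp only [ha, ha', if_true]
      rw [add_assoc, h2h, add_zero, mul_comm]
      exact CharTwo.add_self_eq_zero _
    · intro a ha hfa heq
      apply hne
      have := congrArg (· - a) heq
      simpa using this
    · intro a ha
      simp only [Finset.mem_filter, Finset.mem_univ, true_and] at ha ⊢
      exact hparity a ha
    · intro a ha
      rw [add_assoc, h2h, add_zero]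
  rw [Heven, zero_add] at H
  have Hodd : ∑ k ∈ Finset.univ.filter (fun k => ¬ Even (ZMod.val k)),
      c k * c (if Even k.val then k + h else k)
      = (∑ k ∈ Finset.univ.filter (fun k => ¬ Even (ZMod.val k)), c k) ^ 2 := by
    rw [sum_pow_char]
    apply Finset.sum_congr rfl
    intro k hk
    simp only [Finset.mem_filter] at hk
    simp [hk.2, sq]
  rw [Hodd] at H
  have HS : ∑ k ∈ Finset.univ.filter (fun k => ¬ Even (ZMod.val k)), c k = 0 :=
    pow_eq_zero_iff (by norm_num) |>.mp H
  rw [← HS]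
  apply Finset.sum_nbij' (i := fun i => ((2 * i + 1 : ℕ) : ZMod (2 ^ (m+1))))
    (j := fun k => k.val / 2)
  · intro i hi
    rw [Finset.mem_range] at hi
    simp only [Finset.mem_filter, Finset.mem_univ, true_and]
    rw [ZMod.val_cast_of_lt (by omega)]
    rw [Nat.even_iff]
    omega
  · intro k hk
    simp only [Finset.mem_filter, Finset.mem_univ, true_and] at hk
    rw [Finset.mem_range]
    have := ZMod.val_lt k
    omega
  · intro i hi
    rw [Finset.mem_range] at hi
    rw [ZMod.val_cast_of_lt (by omega)]
    omega
  · intro k hk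
    simp only [Finset.mem_filter, Finset.mem_univ, true_and] at hk
    rw [Nat.not_even_iff] at hk
    have : 2 * (k.val / 2) + 1 = k.val := by omega
    rw [this, ZMod.natCast_val, ZMod.cast_id]
  · intro i hi
    rfl
end

section
/- Let A be a g-circulant involutory matrix of order 2^d (d ≥ 3) over a field of characteristic 2, with g = 2^{d−1} + 1 and first row (c₀,…,c_{2^d−1}). Then c_{2^{d−2}} + c_{3·2^{d−2}} = 0, and consequently A has a singular 2×2 submatrix, so A is not MDS. -/
/-- A square matrix is MDS if every square submatrix (given by injective choices of
rows and columns) is nonsingular. -/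
def IsMDS {n : Type*} [Fintype n] [DecidableEq n] {F : Type*} [Field F]
    (A : Matrix n n F) : Prop :=
  ∀ (m : ℕ) (r c : Fin m → n), Function.Injective r → Function.Injective c →
    (A.submatrix r c).det ≠ 0

theorem g_circulant_stmt_15 (d : ℕ) (hd : 3 ≤ d) (F : Type*) [Field F] [CharP F 2]
    (g : ZMod (2 ^ d)) (hg : g = 2 ^ (d - 1) + 1)
    (c : ZMod (2 ^ d) → F) (A : Matrix (ZMod (2 ^ d)) (ZMod (2 ^ d)) F)
    (hA : ∀ i j : ZMod (2 ^ d), A i j = c (j - g * i))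
    (hinv : A * A = 1) :
    c ((2 ^ (d - 2) : ℕ) : ZMod (2 ^ d)) + c ((3 * 2 ^ (d - 2) : ℕ) : ZMod (2 ^ d)) = 0 ∧
      ¬ IsMDS A := by
  haveI : NeZero (2 ^ d) := ⟨pow_ne_zero d two_ne_zero⟩
  obtain ⟨q, hq⟩ : ∃ q : ZMod (2 ^ d), q = ((2 ^ (d - 2) : ℕ) : ZMod (2 ^ d)) := ⟨_, rfl⟩
  obtain ⟨t, ht⟩ : ∃ t : ZMod (2 ^ d), t = ((2 ^ (d - 1) : ℕ) : ZMod (2 ^ d)) := ⟨_, rfl⟩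
  have hnat : ∀ m : ℕ, d ≤ m → ((2 ^ m : ℕ) : ZMod (2 ^ d)) = 0 := by
    intro m hm
    rw [ZMod.natCast_eq_zero_iff]
    exact pow_dvd_pow 2 hm
  have hcg : ∀ a b : ℕ, a = b →
      ((a : ℕ) : ZMod (2 ^ d)) = ((b : ℕ) : ZMod (2 ^ d)) := fun a b h => by rw [h]
  have h2q : 2 * q = t := by
    have e : ((2 * 2 ^ (d - 2) : ℕ) : ZMod (2 ^ d)) = ((2 ^ (d - 1) : ℕ) : ZMod (2 ^ d)) :=
      hcg _ _ (by rw [← pow_succ']; congr 1; omega)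
    rw [hq, ht]
    push_cast at e ⊢
    linear_combination e
  have h4q : 4 * q = 0 := by
    have e : ((4 * 2 ^ (d - 2) : ℕ) : ZMod (2 ^ d)) = 0 := by
      rw [hcg _ (2 ^ d) (by rw [show (4 : ℕ) = 2 ^ 2 from rfl, ← pow_add]; congr 1; omega)]
      exact hnat d le_rfl
    rw [hq]
    push_cast at e ⊢
    linear_combination e
  have hq2 : 2 * (q * q) = 0 := by
    have e : ((2 * (2 ^ (d - 2) * 2 ^ (d - 2)) : ℕ) : ZMod (2 ^ d)) = 0 := by
      rw [hcg _ (2 ^ (2 * d - 3)) (by rw [← pow_add, ← pow_succ']; congr 1; omega)]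
      exact hnat _ (by omega)
    rw [hq]
    push_cast at e ⊢
    linear_combination e
  have hq3 : q * q * q = 0 := by
    have e : ((2 ^ (d - 2) * 2 ^ (d - 2) * 2 ^ (d - 2) : ℕ) : ZMod (2 ^ d)) = 0 := by
      rw [hcg _ (2 ^ (3 * (d - 2))) (by rw [← pow_add, ← pow_add]; congr 1; omega)]
      exact hnat _ (by omega)
    rw [hq]
    push_cast at e ⊢
    linear_combination e
  have hg' : g = 2 * q + 1 := by
    rw [hg, hq]
    push_cast
    rw [show d - 1 = (d - 2) + 1 by omega, pow_succ]
    ring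
  have htne : t ≠ 0 := by
    rw [ht]
    intro h
    rw [ZMod.natCast_eq_zero_iff] at h
    have h1 := Nat.le_of_dvd (by positivity) h
    have h2 := Nat.pow_lt_pow_right (a := 2) one_lt_two (show d - 1 < d by omega)
    omega
  have key2 : ∀ x : ZMod (2 ^ d), 2 * x = 0 → x = 0 ∨ x = t := by
    intro x hx
    have hval : x = ((x.val : ℕ) : ZMod (2 ^ d)) := (ZMod.natCast_zmod_val x).symm
    have hlt : x.val < 2 ^ d := ZMod.val_lt x
    have h0 : ((2 * x.val : ℕ) : ZMod (2 ^ d)) = 0 := by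
      push_cast
      rw [← hval]
      exact hx
    rw [ZMod.natCast_eq_zero_iff] at h0
    have h1 : 2 ^ (d - 1) ∣ x.val := by
      have h2 : 2 * 2 ^ (d - 1) ∣ 2 * x.val := by
        rw [show 2 * 2 ^ (d - 1) = 2 ^ d from by rw [← pow_succ']; congr 1; omega]
        exact h0
      exact (mul_dvd_mul_iff_left (two_ne_zero)).mp h2
    obtain ⟨m, hm⟩ := h1
    have hpow : 2 ^ d = 2 ^ (d - 1) * 2 := by rw [← pow_succ]; congr 1; omega
    have hm2 : m < 2 := by
      by_contra hcon
      push_neg at hcon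
      have := Nat.mul_le_mul_left (2 ^ (d - 1)) hcon
      omega
    interval_cases m
    · left; rw [hval, hm]; simp
    · right; rw [hval, hm, ht]; norm_num
  have hgg : g * g = 1 := by
    rw [hg']; linear_combination 2 * hq2 + h4q
  have hgt : g * t = t := by
    rw [hg', ← h2q]; linear_combination 2 * hq2
  have hgq : g * q = q := by
    rw [hg']; linear_combination hq2
  have hg3q : g * (3 * q) = 3 * q := by
    rw [hg']; linear_combination 3 * hq2
  have hq3q : q ≠ 3 * q := by
    intro h
    apply htne
    rw [← h2q]
    linear_combination -h
  have hinvol : ∀ x : ZMod (2 ^ d), g * (t - g * (t - x)) = x := by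
    intro x
    have h1 : g * (t - g * (t - x)) = g * t - g * g * (t - x) := by ring
    rw [h1, hgt, hgg]; ring
  have h2F : (2 : F) = 0 := by
    have := CharP.cast_eq_zero F 2
    exact_mod_cast this
  -- the sum identity coming from A * A = 1 at entry (0, t)
  have hsum : ∑ k : ZMod (2 ^ d), c k * c (t - g * k) = 0 := by
    have h1 : (A * A) 0 t = (1 : Matrix (ZMod (2 ^ d)) (ZMod (2 ^ d)) F) 0 t := by rw [hinv]
    rw [Matrix.mul_apply, Matrix.one_apply_ne (Ne.symm htne)] at h1
    rw [← h1]
    apply Finset.sum_congr rfl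
    intro k _
    rw [hA, hA, mul_zero, sub_zero]
  classical
  have hsplit := Finset.sum_filter_add_sum_filter_not Finset.univ
    (fun k : ZMod (2 ^ d) => g * (t - k) = k) (fun k => c k * c (t - g * k))
  have hnonfix : ∑ k ∈ Finset.univ.filter (fun k : ZMod (2 ^ d) => ¬(g * (t - k) = k)),
      c k * c (t - g * k) = 0 := by
    apply Finset.sum_involution (g := fun k _ => g * (t - k))
    · intro a _
      have hsa : c (g * (t - a)) * c (t - g * (g * (t - a))) = c a * c (t - g * a) := by
        have e1 : t - g * (g * (t - a)) = a := by
          rw [← mul_assoc, hgg, one_mul]; ring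
        have e2 : g * (t - a) = t - g * a := by
          have h : g * (t - a) = g * t - g * a := by ring
          rw [h, hgt]
        rw [e1, e2]
        ring
      rw [hsa]
      linear_combination (c a * c (t - g * a)) * h2F
    · intro a ha _
      simp only [Finset.mem_filter, Finset.mem_univ, true_and] at ha
      exact ha
    · intro a ha
      simp only [Finset.mem_filter, Finset.mem_univ, true_and] at ha ⊢
      intro hcon
      apply ha
      have h5 := hinvol a
      rw [hcon] at h5
      exact h5
    · intro a _
      exact hinvol a
  -- the fixed points are exactly q and 3q
  have hfix : Finset.univ.filter (fun k : ZMod (2 ^ d) => g * (t - k) = k) = {q, 3 * q} := by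
    ext k
    simp only [Finset.mem_filter, Finset.mem_univ, true_and, Finset.mem_insert,
      Finset.mem_singleton]
    constructor
    · intro hk
      have h1 : t - k = g * k := by
        calc t - k = g * (g * (t - k)) := by rw [← mul_assoc, hgg, one_mul]
          _ = g * k := by rw [hk]
      have h2 : 2 * ((q + 1) * k - q) = 0 := by
        rw [hg'] at h1
        linear_combination -h1 - h2q
      rcases key2 _ h2 with h3 | h3
      · have h4 : (q + 1) * k = q := by linear_combination h3
        have h5 : k = q - q * q := by
          have hv : (1 - q + q * q) * ((q + 1) * k) = (1 - q + q * q) * q := by rw [h4]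
          calc k = (1 + q * q * q) * k := by rw [hq3]; ring
            _ = (1 - q + q * q) * ((q + 1) * k) := by ring
            _ = (1 - q + q * q) * q := hv
            _ = q - q * q + q * q * q := by ring
            _ = q - q * q := by rw [hq3]; ring
        rcases key2 _ hq2 with h6 | h6
        · left; rw [h5, h6]; ring
        · right; rw [h5, h6, ← h2q]; linear_combination -h4q
      · have h4 : (q + 1) * k = 3 * q := by
          rw [← h2q] at h3
          linear_combination h3
        have h5 : k = 3 * q - 3 * (q * q) := by
          have hv : (1 - q + q * q) * ((q + 1) * k) = (1 - q + q * q) * (3 * q) := by rw [h4]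
          calc k = (1 + q * q * q) * k := by rw [hq3]; ring
            _ = (1 - q + q * q) * ((q + 1) * k) := by ring
            _ = (1 - q + q * q) * (3 * q) := hv
            _ = 3 * q - 3 * (q * q) + 3 * (q * q * q) := by ring
            _ = 3 * q - 3 * (q * q) := by rw [hq3]; ring
        rcases key2 _ hq2 with h6 | h6
        · right; rw [h5, h6]; ring
        · left; rw [h5, h6, ← h2q]; linear_combination -h4q
    · rintro (rfl | rfl)
      · have h : t - k = k := by rw [← h2q]; ring
        rw [h, hgq]
      · have h : t - 3 * q = 3 * q := by
          rw [← h2q]; linear_combination -h4q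
        rw [h, hg3q]
  -- key identity
  have hkey : c q * c q + c (3 * q) * c (3 * q) = 0 := by
    have e1 : t - g * q = q := by rw [hgq, ← h2q]; ring
    have e2 : t - g * (3 * q) = 3 * q := by
      rw [hg3q, ← h2q]; linear_combination -h4q
    have h1 : ∑ k ∈ ({q, 3 * q} : Finset (ZMod (2 ^ d))), c k * c (t - g * k) = 0 := by
      rw [← hfix]
      have h2 := hsplit
      rw [hnonfix, add_zero, hsum] at h2
      exact h2
    rw [Finset.sum_insert (by simpa using hq3q), Finset.sum_singleton, e1, e2] at h1
    exact h1
  have hmain : c q + c (3 * q) = 0 := by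
    have h1 : (c q + c (3 * q)) * (c q + c (3 * q)) = 0 := by
      linear_combination hkey + (c q * c (3 * q)) * h2F
    exact mul_self_eq_zero.mp h1
  have h3qcast : ((3 * 2 ^ (d - 2) : ℕ) : ZMod (2 ^ d)) = 3 * q := by
    rw [hq]; push_cast; ring
  constructor
  · rw [← hq, h3qcast]; exact hmain
  · clear hsplit hnonfix hfix hkey hsum key2 hinvol hnat hcg hinv hgg hg' hg hq2 hq3
    intro hM
    apply hM 2 ![0, t] ![q, 3 * q]
    · intro i j hij
      fin_cases i <;> fin_cases j <;>
        simp only [Matrix.cons_val_zero, Matrix.cons_val_one, Matrix.head_cons,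
          Fin.mk_zero, Fin.mk_one, Fin.zero_eta, Fin.isValue] at hij ⊢
      · exact absurd hij.symm htne
      · exact absurd hij htne
    · intro i j hij
      fin_cases i <;> fin_cases j <;>
        simp only [Matrix.cons_val_zero, Matrix.cons_val_one, Matrix.head_cons,
          Fin.mk_zero, Fin.mk_one, Fin.zero_eta, Fin.isValue] at hij ⊢
      · exact absurd hij hq3q
      · exact absurd hij.symm hq3q
    · rw [Matrix.det_fin_two]
      simp only [Matrix.submatrix_apply, Matrix.cons_val_zero, Matrix.cons_val_one,
        Matrix.head_cons]
      rw [hA, hA, hA, hA]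
      simp only [mul_zero, sub_zero, hgt]
      have e1 : q - t = 3 * q := by rw [← h2q]; linear_combination -h4q
      have e2 : 3 * q - t = q := by rw [← h2q]; ring
      rw [e1, e2]
      linear_combination (c q - c (3 * q)) * hmain
end

section
/- Let k have an odd prime factor, and let A be a g-circulant matrix of order k over a finite field of characteristic 2 with gcd(g,k) = 1, g² ≡ 1 (mod k), and 1 ≤ g < k−1. If A is involutory, then A is not MDS. -/
theorem g_circulant_stmt_17 (k : ℕ) [NeZero k]
    (hk : ∃ p : ℕ, p.Prime ∧ p ≠ 2 ∧ p ∣ k)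
    (F : Type*) [Field F] [Fintype F] [CharP F 2]
    (g : ℕ) (hg : Nat.gcd g k = 1) (hg2 : ((g : ZMod k)) ^ 2 = 1)
    (hg1 : 1 ≤ g) (hgk : g < k - 1)
    (c : ZMod k → F) (A : Matrix (ZMod k) (ZMod k) F)
    (hA : ∀ i j : ZMod k, A i j = c (j - (g : ZMod k) * i))
    (hinv : A * A = 1) :
    ¬ IsMDS A := by
  intro hMDS
  classical
  set G : ZMod k := (g : ZMod k) with hGdef
  have hG2 : G * G = 1 := by rw [← sq]; exact hg2
  -- 1 + G ≠ 0
  have hkpos : 0 < k := Nat.pos_of_ne_zero (NeZero.ne k)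
  have hu0 : (1 + G : ZMod k) ≠ 0 := by
    intro h
    have h1 : ((g + 1 : ℕ) : ZMod k) = 0 := by
      push_cast
      rw [add_comm]
      exact h
    rw [ZMod.natCast_eq_zero_iff] at h1
    have := Nat.le_of_dvd (by omega) h1
    omega
  set u : ZMod k := -(1 + G) with hudef
  have hune : u ≠ 0 := by rw [hudef]; exact neg_ne_zero.mpr hu0
  have hGu : G * u = u := by
    rw [hudef]
    have : G * -(1 + G) = -(G + G * G) := by ring
    rw [this, hG2]
    ring_nf
  have hGG : (1 + G) * G = 1 + G := by
    have : (1 + G) * G = G + G * G := by ring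
    rw [this, hG2]; ring
  -- the two index sets
  set P : Finset (ZMod k) := Finset.univ.filter (fun s => (1 + G) * s = u) with hPdef
  set H : Finset (ZMod k) := Finset.univ.filter (fun s => (1 + G) * s = 0) with hHdef
  have hmemP : ∀ s : ZMod k, s ∈ P ↔ (1 + G) * s = u := by
    intro s; simp [hPdef]
  have hmemH : ∀ s : ZMod k, s ∈ H ↔ (1 + G) * s = 0 := by
    intro s; simp [hHdef]
  -- From A * A = 1 : ∑ t, c t * c (u - G * t) = 0
  have hf : ∑ t : ZMod k, c t * c (u - G * t) = 0 := by
    have := congrFun (congrFun hinv (0 : ZMod k)) u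
    rw [Matrix.mul_apply, Matrix.one_apply_ne (Ne.symm hune)] at this
    rw [← this]
    apply Finset.sum_congr rfl
    intro t _
    rw [hA, hA]
    simp
  -- pairing argument : sum over complement of P vanishes
  have hsplit :
      ∑ t : ZMod k, c t * c (u - G * t)
        = ∑ t ∈ P, c t * c (u - G * t)
          + ∑ t ∈ Finset.univ.filter (fun s => ¬ ((1 + G) * s = u)), c t * c (u - G * t) := by
    rw [hPdef]
    exact (Finset.sum_filter_add_sum_filter_not _ _ _).symm
  have hcomp :
      ∑ t ∈ Finset.univ.filter (fun s => ¬ ((1 + G) * s = u)), c t * c (u - G * t) = 0 := by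
    apply Finset.sum_involution (g := fun a _ => u - G * a)
    · intro a _
      have harg : u - G * (u - G * a) = a := by
        have : u - G * (u - G * a) = u - G * u + G * G * a := by ring
        rw [this, hGu, hG2]; ring
      rw [harg]
      rw [mul_comm]
      exact CharTwo.add_self_eq_zero _
    · intro a ha hne
      intro h
      simp only [Finset.mem_filter] at ha
      exact ha.2 (by linear_combination -h)
    · intro a ha
      simp only [Finset.mem_filter, Finset.mem_univ, true_and] at ha ⊢
      intro h
      apply ha
      have h2 : (1 + G) * (u - G * a) = u + G * u - (1 + G) * G * a := by ring
      rw [hGG] at h2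
      have h3 : u + G * u = 2 * u := by rw [hGu]; ring
      rw [h3] at h2
      -- h : (1+G) * (u - G*a) = u,  h2 : ... = 2*u - (1+G)*a
      have : (1 + G) * a = u := by
        have := h2.symm.trans h
        linear_combination -this
      exact this
    · intro a ha
      have : u - G * (u - G * a) = a := by
        have h4 : u - G * (u - G * a) = u - G * u + G * G * a := by ring
        rw [h4, hGu, hG2]; ring
      exact this
  have hPsum2 : ∑ t ∈ P, c t * c (u - G * t) = 0 := by
    have := hf
    rw [hsplit, hcomp, add_zero] at this
    exact this
  -- on P the terms are squares
  have hPsq : ∑ t ∈ P, (c t) ^ 2 = 0 := by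
    rw [← hPsum2]
    apply Finset.sum_congr rfl
    intro t ht
    rw [hmemP] at ht
    have harg : u - G * t = t := by
      have : u - G * t = (1 + G) * t - G * t := by rw [ht]
      rw [this]; ring
    rw [harg, sq]
  -- hence the sum over P of c vanishes (Frobenius)
  have hPsum : ∑ t ∈ P, c t = 0 := by
    have hfrob : (∑ t ∈ P, c t) ^ 2 = ∑ t ∈ P, (c t) ^ 2 := by
      have h2 := map_sum (frobenius F 2) c P
      simp only [frobenius_def] at h2
      exact h2
    have : (∑ t ∈ P, c t) ^ 2 = 0 := by rw [hfrob, hPsq]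
    exact pow_eq_zero_iff (by norm_num) |>.mp this
  -- Build the singular submatrix
  have h0H : (0 : ZMod k) ∈ H := by rw [hmemH]; ring
  set m : ℕ := H.card with hmdef
  have hmpos : 0 < m := Finset.card_pos.mpr ⟨0, h0H⟩
  set e : Fin m → ZMod k := fun i => ((H.equivFin.symm i : H) : ZMod k) with hedef
  have heH : ∀ i, e i ∈ H := fun i => (H.equivFin.symm i).2
  have heInj : Function.Injective e := by
    intro a b hab
    have := Subtype.ext hab
    exact H.equivFin.symm.injective this
  have heSurj : ∀ x ∈ H, ∃ i, e i = x := by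
    intro x hx
    exact ⟨H.equivFin ⟨x, hx⟩, by simp [hedef]⟩
  set rr : Fin m → ZMod k := fun i => 1 + e i with hrrdef
  have hrrInj : Function.Injective rr := by
    intro a b hab
    exact heInj (by simpa [hrrdef] using hab)
  -- each row of the submatrix sums to ∑_{s ∈ P} c s = 0
  have hrowsum : ∀ i : Fin m, ∑ j : Fin m, A (rr i) (e j) = 0 := by
    intro i
    have hstep : ∑ j : Fin m, A (rr i) (e j) = ∑ s ∈ P, c s := by
      have hrw : ∀ j : Fin m, A (rr i) (e j) = c (e j - G * (1 + e i)) := by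
        intro j; rw [hA]
      calc ∑ j : Fin m, A (rr i) (e j)
          = ∑ j : Fin m, c (e j - G * (1 + e i)) := Finset.sum_congr rfl (fun j _ => hrw j)
        _ = ∑ s ∈ P, c s := by
            apply Finset.sum_bij (i := fun j _ => e j - G * (1 + e i))
            · intro a _
              rw [hmemP]
              have h1 : (1 + G) * (e a - G * (1 + e i))
                  = (1 + G) * e a - (1 + G) * G - (1 + G) * G * e i := by ring
              have h2 : (1 + G) * e a = 0 := (hmemH _).mp (heH a)
              have h3 : (1 + G) * e i = 0 := (hmemH _).mp (heH i)
              rw [h1, h2, hGG]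
              have : (1 + G) * e i = 0 := h3
              linear_combination -this
            · intro a _ b _ hab
              apply heInj
              have := sub_left_injective hab
              exact this
            · intro s hs
              rw [hmemP] at hs
              have hx : s + G * (1 + e i) ∈ H := by
                rw [hmemH]
                have h1 : (1 + G) * (s + G * (1 + e i))
                    = (1 + G) * s + (1 + G) * G + (1 + G) * G * e i := by ring
                have h3 : (1 + G) * e i = 0 := (hmemH _).mp (heH i)
                rw [h1, hs, hGG]
                have h4 : (1 + G) * e i = 0 := h3
                have : u + (1 + G) = 0 := by rw [hudef]; ring
                linear_combination this + h4
              obtain ⟨j, hj⟩ := heSurj _ hx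
              refine ⟨j, Finset.mem_univ j, ?_⟩
              rw [hj]
              ring
            · intro a _; rfl
    rw [hstep, hPsum]
  -- the all-ones vector is in the kernel
  have hdet : (A.submatrix rr e).det = 0 := by
    rw [← Matrix.exists_mulVec_eq_zero_iff]
    refine ⟨fun _ => 1, ?_, ?_⟩
    · intro h
      have := congrFun h ⟨0, hmpos⟩
      simp at this
    · funext i
      simp only [Matrix.mulVec, dotProduct, Matrix.submatrix_apply, mul_one]
      exact hrowsum i
  exact hMDS m rr e hrrInj heInj hdet
end

section
/- Let A be a left-circulant matrix of order k over a field of characteristic 2 with first row (c₀,…,c_{k−1}). Then A is involutory if and only if (1) Σ_{i=0}^{k−1} c_i = 1, and (2) for each l with 1 ≤ l ≤ ⌊(k−1)/2⌋, Σ_{i,j : −i + j ≡ l (mod k)} c_i c_j = 0. -/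
section Aux
variable {k : ℕ} [NeZero k] {F : Type*} [Field F] [CharP F 2] (c : ZMod k → F)

private def fsum (d : ZMod k) : F := ∑ s : ZMod k, c s * c (s + d)

omit [CharP F 2] in
private lemma fsum_neg (d : ZMod k) : fsum c (-d) = fsum c d := by
  unfold fsum
  apply Fintype.sum_equiv (Equiv.subRight d)
  intro x
  simp only [Equiv.subRight_apply]
  have h1 : x - d + d = x := by ring
  have h2 : x + -d = x - d := by ring
  rw [h1, h2, mul_comm]

private lemma fsum_two_eq_zero {d : ZMod k} (hd : d ≠ 0) (h2 : d + d = 0) :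
    fsum c d = 0 := by
  unfold fsum
  apply Finset.sum_involution (fun a _ => a + d)
  · intro a _
    have : a + d + d = a := by rw [add_assoc, h2, add_zero]
    rw [this]
    have h2' : (2 : F) = 0 := CharTwo.two_eq_zero
    linear_combination (c a * c (a + d)) * h2'
  · intro a _ _
    simpa using hd
  · intros; simp
  · intro a _
    rw [add_assoc, h2, add_zero]

end Aux

theorem g_circulant_stmt_18 (k : ℕ) [NeZero k] (F : Type*) [Field F] [CharP F 2]
    (c : ZMod k → F) (A : Matrix (ZMod k) (ZMod k) F)
    (hA : ∀ i j : ZMod k, A i j = c (i + j)) :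
    A * A = 1 ↔
      (∑ i : ZMod k, c i = 1) ∧
        ∀ l : ℕ, 1 ≤ l → l ≤ (k - 1) / 2 →
          (∑ i : ZMod k, ∑ j : ZMod k,
            if j - i = (l : ZMod k) then c i * c j else 0) = 0 := by
  have hk : 1 ≤ k := Nat.one_le_iff_ne_zero.mpr (NeZero.ne k)
  -- (A*A) i j = fsum c (j - i)
  have hmul : ∀ i j : ZMod k, (A * A) i j = fsum c (j - i) := by
    intro i j
    rw [Matrix.mul_apply]
    simp only [hA]
    unfold fsum
    apply Fintype.sum_equiv (Equiv.addLeft i)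
    intro t
    simp only [Equiv.coe_addLeft]
    congr 1
    · congr 1; ring
  -- the double sum equals fsum
  have hdsum : ∀ d : ZMod k,
      (∑ i : ZMod k, ∑ j : ZMod k, if j - i = d then c i * c j else 0) = fsum c d := by
    intro d
    unfold fsum
    apply Finset.sum_congr rfl
    intro i _
    have : ∀ j : ZMod k, (if j - i = d then c i * c j else 0)
        = if j = i + d then c i * c j else 0 := by
      intro j; congr 1; simp [sub_eq_iff_eq_add']
    simp only [this]
    rw [Finset.sum_ite_eq' Finset.univ (i + d) (fun j => c i * c j)]
    simp
  -- fsum c 0 = (∑ c)^2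
  have hf0 : fsum c 0 = (∑ i : ZMod k, c i) ^ 2 := by
    unfold fsum
    rw [sum_pow_char]
    exact Finset.sum_congr rfl fun s _ => by rw [add_zero]; ring
  have hsq : (∑ i : ZMod k, c i) ^ 2 = 1 ↔ (∑ i : ZMod k, c i) = 1 := by
    constructor
    · intro h
      have h2' : (2 : F) = 0 := CharTwo.two_eq_zero
      have h2 : ((∑ i : ZMod k, c i) - 1) ^ 2 = 0 := by
        linear_combination h + (1 - ∑ i : ZMod k, c i) * h2'
      have := pow_eq_zero_iff (n := 2) (by norm_num) |>.mp h2
      exact sub_eq_zero.mp this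
    · intro h; rw [h]; ring
  constructor
  · intro hAA
    constructor
    · have := hmul 0 0
      rw [hAA] at this
      simp at this
      rw [← hsq, ← hf0, ← this]
    · intro l hl1 hl2
      rw [hdsum]
      have hlk : l < k := by omega
      have hl0 : (l : ZMod k) ≠ 0 := by
        rw [Ne, ZMod.natCast_eq_zero_iff]
        intro h
        have := Nat.le_of_dvd (by omega) h
        omega
      have := hmul 0 (l : ZMod k)
      rw [hAA] at this
      rw [sub_zero] at this
      rw [Matrix.one_apply_ne (by simpa [eq_comm] using hl0)] at this
      exact this.symm
  · rintro ⟨h1, h2⟩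
    ext i j
    rw [hmul]
    by_cases hij : i = j
    · subst hij
      rw [sub_self, hf0, hsq.mpr h1, Matrix.one_apply_eq]
    · rw [Matrix.one_apply_ne fun h => hij h]
      set d := j - i with hd
      have hdne : d ≠ 0 := sub_ne_zero.mpr (Ne.symm hij)
      by_cases h2d : d + d = 0
      · exact fsum_two_eq_zero c hdne h2d
      · have hv : d.val < k := ZMod.val_lt d
        have hv0 : d.val ≠ 0 := fun h => hdne ((ZMod.val_eq_zero d).mp h)
        have hvk : 2 * d.val ≠ k := by
          intro h
          apply h2d
          have h0 : ((d.val + d.val : ℕ) : ZMod k) = 0 := by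
            rw [show d.val + d.val = k by omega]; exact ZMod.natCast_self k
          rwa [Nat.cast_add, ZMod.natCast_val, ZMod.cast_id] at h0
        have hcase : d.val ≤ (k - 1) / 2 ∨ (k - d.val) ≤ (k - 1) / 2 := by omega
        rcases hcase with hc | hc
        · have := h2 d.val (by omega) hc
          rw [hdsum] at this
          rwa [ZMod.natCast_val, ZMod.cast_id] at this
        · have := h2 (k - d.val) (by omega) hc
          rw [hdsum] at this
          have heq : ((k - d.val : ℕ) : ZMod k) = -d := by
            rw [Nat.cast_sub (le_of_lt hv), ZMod.natCast_self, ZMod.natCast_val,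
              ZMod.cast_id, zero_sub]
          rw [heq, fsum_neg] at this
          exact this
end
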